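/- arXiv:2603.24816 — 5 statements merged into one kernel-verified Lean document; each statement's English description precedes it below -/
import Mathlib

section
/- Let T be a contraction on a Hilbert space H and suppose a sequence of powers T^{n_k} converges in the weak operator topology to an operator V, and another sequence T^{m_k} converges weakly to an operator W. Then WV is also a weak operator limit of some subsequence of powers of T. -/
open Filter

local notation "⟪" x ", " y "⟫" => @inner ℂ _ _ x y

lemma aux_dense {H : Type*} [NormedAddCommGroup H] [InnerProductSpace ℂ H]
    (E : ℕ → H →L[ℂ] H) (C : ℝ) (hC : ∀ k, ‖E k‖ ≤ C)
    (u : ℕ → H) (hu : DenseRange u)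
    (h : ∀ i i' : ℕ, Tendsto (fun k => ⟪(E k) (u i), u i'⟫) atTop (nhds 0))
    (x y : H) : Tendsto (fun k => ⟪(E k) x, y⟫) atTop (nhds 0) := by
  have hC0 : 0 ≤ C := le_trans (norm_nonneg _) (hC 0)
  rw [NormedAddCommGroup.tendsto_nhds_zero]
  intro ε hε
  set D : ℝ := 3 * (C + 1) * (‖x‖ + ‖y‖ + 2) with hD
  have hDpos : 0 < D := by positivity
  set δ : ℝ := min 1 (ε / D) with hδ
  have hδpos : 0 < δ := lt_min one_pos (by positivity)
  have hδ1 : δ ≤ 1 := min_le_left _ _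
  have hδD : D * δ ≤ ε := by
    have : δ ≤ ε / D := min_le_right _ _
    calc D * δ ≤ D * (ε / D) := by nlinarith
      _ = ε := by field_simp
  obtain ⟨i, hi⟩ := Metric.denseRange_iff.mp hu x δ hδpos
  obtain ⟨i', hi'⟩ := Metric.denseRange_iff.mp hu y δ hδpos
  rw [dist_eq_norm] at hi hi'
  have hui : ‖u i‖ ≤ ‖x‖ + 1 := by
    have := norm_le_norm_add_norm_sub' (u i) x
    have h2 : ‖x - u i‖ ≤ 1 := le_trans hi.le hδ1
    calc ‖u i‖ ≤ ‖x‖ + ‖x - u i‖ := by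
          have := norm_sub_norm_le x (u i)
          have h3 : ‖u i‖ - ‖x‖ ≤ ‖u i - x‖ := by
            have := norm_sub_norm_le (u i) x
            linarith
          rw [norm_sub_rev] at h3
          linarith
      _ ≤ ‖x‖ + 1 := by linarith
  have h3 : ∀ᶠ k in atTop, ‖⟪(E k) (u i), u i'⟫‖ < ε / 3 :=
    NormedAddCommGroup.tendsto_nhds_zero.mp (h i i') (ε / 3) (by positivity)
  filter_upwards [h3] with k hk
  have t1 : ‖⟪(E k) (x - u i), y⟫‖ ≤ ε / 3 := by
    have b1 : ‖(E k) (x - u i)‖ ≤ C * δ := by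
      calc ‖(E k) (x - u i)‖ ≤ ‖E k‖ * ‖x - u i‖ := (E k).le_opNorm _
        _ ≤ C * δ := mul_le_mul (hC k) hi.le (norm_nonneg _) hC0
    calc ‖⟪(E k) (x - u i), y⟫‖ ≤ ‖(E k) (x - u i)‖ * ‖y‖ := norm_inner_le_norm _ _
      _ ≤ (C * δ) * ‖y‖ := mul_le_mul_of_nonneg_right b1 (norm_nonneg _)
      _ ≤ ε / 3 := by
          have hδD' : 3 * (C + 1) * (‖x‖ + ‖y‖ + 2) * δ ≤ ε := by rw [← hD]; exact hδD
          nlinarith [hδpos.le, norm_nonneg x, norm_nonneg y, hC0,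
            mul_nonneg (mul_nonneg hC0 (norm_nonneg x)) hδpos.le,
            mul_nonneg hC0 hδpos.le, mul_nonneg (norm_nonneg x) hδpos.le,
            mul_nonneg (norm_nonneg y) hδpos.le]
  have t2 : ‖⟪(E k) (u i), y - u i'⟫‖ ≤ ε / 3 := by
    have b2 : ‖(E k) (u i)‖ ≤ C * (‖x‖ + 1) := by
      calc ‖(E k) (u i)‖ ≤ ‖E k‖ * ‖u i‖ := (E k).le_opNorm _
        _ ≤ C * (‖x‖ + 1) := mul_le_mul (hC k) hui (norm_nonneg _) hC0
    calc ‖⟪(E k) (u i), y - u i'⟫‖ ≤ ‖(E k) (u i)‖ * ‖y - u i'‖ := norm_inner_le_norm _ _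
      _ ≤ (C * (‖x‖ + 1)) * δ := by
          apply mul_le_mul b2 hi'.le (norm_nonneg _) (by positivity)
      _ ≤ ε / 3 := by
          have hδD' : 3 * (C + 1) * (‖x‖ + ‖y‖ + 2) * δ ≤ ε := by rw [← hD]; exact hδD
          nlinarith [hδpos.le, norm_nonneg x, norm_nonneg y, hC0,
            mul_nonneg (mul_nonneg hC0 (norm_nonneg y)) hδpos.le,
            mul_nonneg hC0 hδpos.le, mul_nonneg (norm_nonneg x) hδpos.le,
            mul_nonneg (norm_nonneg y) hδpos.le]
  have hdec : ⟪(E k) x, y⟫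
      = ⟪(E k) (x - u i), y⟫ + ⟪(E k) (u i), y - u i'⟫ + ⟪(E k) (u i), u i'⟫ := by
    simp only [map_sub, inner_sub_left, inner_sub_right]
    ring
  calc ‖⟪(E k) x, y⟫‖
      = ‖⟪(E k) (x - u i), y⟫ + ⟪(E k) (u i), y - u i'⟫ + ⟪(E k) (u i), u i'⟫‖ := by rw [hdec]
    _ ≤ ‖⟪(E k) (x - u i), y⟫‖ + ‖⟪(E k) (u i), y - u i'⟫‖ + ‖⟪(E k) (u i), u i'⟫‖ :=
        norm_add₃_le
    _ < ε / 3 + ε / 3 + ε / 3 := by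
        apply add_lt_add_of_le_of_lt (add_le_add t1 t2) hk
    _ = ε := by ring

/-- The weak limit semigroup of a Hilbert-space contraction is closed under
multiplication: if `T^{n_k} → V` and `T^{m_k} → W` in the weak operator
topology, then `W V` is the weak operator limit of some subsequence of powers
of `T`. -/
theorem stmt_1 {H : Type*} [NormedAddCommGroup H] [InnerProductSpace ℂ H]
    [TopologicalSpace.SeparableSpace H] [CompleteSpace H]
    (T V W : H →L[ℂ] H) (hT : ‖T‖ ≤ 1)
    (n m : ℕ → ℕ) (hn : StrictMono n) (hm : StrictMono m)
    (hV : ∀ x y : H, Tendsto (fun k => ⟪(T ^ n k) x, y⟫) atTop (nhds ⟪V x, y⟫))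
    (hW : ∀ x y : H, Tendsto (fun k => ⟪(T ^ m k) x, y⟫) atTop (nhds ⟪W x, y⟫)) :
    ∃ p : ℕ → ℕ, StrictMono p ∧
      ∀ x y : H, Tendsto (fun k => ⟪(T ^ p k) x, y⟫) atTop (nhds ⟪(W ∘L V) x, y⟫) := by
  have : Nonempty H := ⟨0⟩
  set u : ℕ → H := TopologicalSpace.denseSeq H with hu_def
  have hu : DenseRange u := TopologicalSpace.denseRange_denseSeq H
  -- the approximation property
  have key : ∀ k N : ℕ, ∃ j, N ≤ j ∧ ∀ i ∈ Finset.range (k+1), ∀ i' ∈ Finset.range (k+1),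
      ‖⟪(T ^ m j) ((T ^ n k) (u i)), u i'⟫ - ⟪W ((T ^ n k) (u i)), u i'⟫‖ < 1 / (k+1) := by
    intro k N
    have hev : ∀ᶠ j in atTop, ∀ i ∈ Finset.range (k+1), ∀ i' ∈ Finset.range (k+1),
        ‖⟪(T ^ m j) ((T ^ n k) (u i)), u i'⟫ - ⟪W ((T ^ n k) (u i)), u i'⟫‖ < 1 / (k+1) := by
      rw [Filter.eventually_all_finset]
      intro i _
      rw [Filter.eventually_all_finset]
      intro i' _
      have ht : Tendsto (fun j => ⟪(T ^ m j) ((T ^ n k) (u i)), u i'⟫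
          - ⟪W ((T ^ n k) (u i)), u i'⟫) atTop (nhds 0) :=
        tendsto_sub_nhds_zero_iff.mpr (hW ((T ^ n k) (u i)) (u i'))
      exact NormedAddCommGroup.tendsto_nhds_zero.mp ht _ (by positivity)
    exact ((eventually_ge_atTop N).and hev).exists
  choose F hF1 hF2 using key
  set J : ℕ → ℕ := fun k => Nat.rec (F 0 0) (fun k' jk => F (k'+1) (jk+1)) k with hJ_def
  have hJsucc : ∀ k, J (k+1) = F (k+1) (J k + 1) := fun k => rfl
  have hJmono : StrictMono J := strictMono_nat_of_lt_succ (fun k => by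
    have := hF1 (k+1) (J k + 1)
    rw [hJsucc]; omega)
  have hPJ : ∀ k, ∀ i ∈ Finset.range (k+1), ∀ i' ∈ Finset.range (k+1),
      ‖⟪(T ^ m (J k)) ((T ^ n k) (u i)), u i'⟫ - ⟪W ((T ^ n k) (u i)), u i'⟫‖ < 1 / (k+1) := by
    intro k
    cases k with
    | zero => exact hF2 0 0
    | succ k' => rw [hJsucc]; exact hF2 (k'+1) (J k' + 1)
  set p : ℕ → ℕ := fun k => n k + m (J k) with hp_def
  have hpmono : StrictMono p := fun a b hab =>
    add_lt_add (hn hab) (hm (hJmono hab))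
  refine ⟨p, hpmono, ?_⟩
  -- norms
  have hnormT : ∀ j : ℕ, ‖T ^ j‖ ≤ 1 := by
    intro j
    induction j with
    | zero => simpa [ContinuousLinearMap.one_def] using ContinuousLinearMap.norm_id_le (𝕜 := ℂ) (E := H)
    | succ j ih =>
        rw [pow_succ]
        calc ‖T ^ j * T‖ ≤ ‖T ^ j‖ * ‖T‖ := norm_mul_le _ _
          _ ≤ 1 := by nlinarith [norm_nonneg (T ^ j), norm_nonneg T]
  set E : ℕ → H →L[ℂ] H := fun k => (T ^ m (J k) - W) ∘L (T ^ n k) with hE_def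
  have hCE : ∀ k, ‖E k‖ ≤ 1 + ‖W‖ := by
    intro k
    calc ‖E k‖ ≤ ‖T ^ m (J k) - W‖ * ‖T ^ n k‖ := ContinuousLinearMap.opNorm_comp_le _ _
      _ ≤ (1 + ‖W‖) * 1 := by
          apply mul_le_mul _ (hnormT _) (norm_nonneg _) (by positivity)
          calc ‖T ^ m (J k) - W‖ ≤ ‖T ^ m (J k)‖ + ‖W‖ := norm_sub_le _ _
            _ ≤ 1 + ‖W‖ := by linarith [hnormT (m (J k))]
      _ = 1 + ‖W‖ := mul_one _
  have hpair : ∀ i i' : ℕ, Tendsto (fun k => ⟪(E k) (u i), u i'⟫) atTop (nhds 0) := by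
    intro i i'
    apply squeeze_zero_norm' (a := fun k : ℕ => 1 / ((k : ℝ) + 1))
    · filter_upwards [eventually_ge_atTop (max i i')] with k hk
      have hi : i ∈ Finset.range (k+1) := Finset.mem_range.mpr (by omega)
      have hi' : i' ∈ Finset.range (k+1) := Finset.mem_range.mpr (by omega)
      have := hPJ k i hi i' hi'
      have heq : ⟪(E k) (u i), u i'⟫
          = ⟪(T ^ m (J k)) ((T ^ n k) (u i)), u i'⟫ - ⟪W ((T ^ n k) (u i)), u i'⟫ := by
        simp [hE_def, ContinuousLinearMap.sub_apply, inner_sub_left]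
      rw [heq]
      push_cast at this ⊢
      exact this.le
    · exact tendsto_one_div_add_atTop_nhds_zero_nat
  have hE := aux_dense E (1 + ‖W‖) hCE u hu hpair
  intro x y
  set W' := ContinuousLinearMap.adjoint W with hW'
  have hdecomp : ∀ k, ⟪(T ^ p k) x, y⟫ = ⟪(E k) x, y⟫ + ⟪(T ^ n k) x, W' y⟫ := by
    intro k
    have h1 : (T ^ p k) x = (T ^ m (J k)) ((T ^ n k) x) := by
      rw [hp_def]
      simp only [add_comm (n k) (m (J k)), pow_add, ContinuousLinearMap.mul_apply]
    have h2 : ⟪(T ^ n k) x, W' y⟫ = ⟪W ((T ^ n k) x), y⟫ :=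
      ContinuousLinearMap.adjoint_inner_right W _ _
    rw [h1, h2]
    simp [hE_def, ContinuousLinearMap.sub_apply, inner_sub_left]
  have hlim : ⟪(W ∘L V) x, y⟫ = 0 + ⟪V x, W' y⟫ := by
    rw [zero_add, ContinuousLinearMap.comp_apply]
    exact (ContinuousLinearMap.adjoint_inner_right W _ _).symm
  rw [hlim]
  have := (hE x y).add (hV x (W' y))
  simpa only [← hdecomp] using this
end

section
/- Let T be a unitary operator on a Hilbert space whose weak limit semigroup contains the identity operator I. Then the weak limit semigroup of T is closed under taking adjoints: if V is a weak limit of a subsequence of powers of T, then so is V*. -/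
open Filter

local notation "⟪" x ", " y "⟫" => @inner ℂ _ _ x y

/-- `S` belongs to the weak limit semigroup of `T`: some subsequence of powers of `T`
converges to `S` in the weak operator topology. -/
def IsWeakLimitOfPowers {H : Type*} [NormedAddCommGroup H] [InnerProductSpace ℂ H]
    (T S : H →L[ℂ] H) : Prop :=
  ∃ n : ℕ → ℕ, StrictMono n ∧
    ∀ x y : H, Tendsto (fun k => ⟪(T ^ n k) x, y⟫) atTop (nhds ⟪S x, y⟫)

/-- For a unitary operator `T` whose weak limit semigroup contains the identity,
the weak limit semigroup is closed under taking adjoints. -/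
theorem stmt_3 {H : Type*} [NormedAddCommGroup H] [InnerProductSpace ℂ H]
    [CompleteSpace H]
    (T : H →L[ℂ] H) (hiso : ∀ x, ‖T x‖ = ‖x‖) (hsurj : Function.Surjective T)
    (hI : IsWeakLimitOfPowers T 1)
    (V : H →L[ℂ] H) (hV : IsWeakLimitOfPowers T V) :
    IsWeakLimitOfPowers T (ContinuousLinearMap.adjoint V) := by
  obtain ⟨n, hn, hIc⟩ := hI
  obtain ⟨m, hm, hVc⟩ := hV
  -- powers of T preserve norms
  have hpow : ∀ (b : ℕ) (x : H), ‖(T ^ b) x‖ = ‖x‖ := by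
    intro b
    induction b with
    | zero => intro x; simp
    | succ b ih =>
        intro x
        rw [pow_succ, ContinuousLinearMap.mul_apply, ih, hiso]
  -- T preserves inner products
  have hTin : ∀ x y : H, ⟪T x, T y⟫ = ⟪x, y⟫ := fun x y =>
    LinearIsometry.inner_map_map ⟨(T : H →ₗ[ℂ] H), hiso⟩ x y
  have hpin : ∀ (b : ℕ) (x y : H), ⟪(T ^ b) x, (T ^ b) y⟫ = ⟪x, y⟫ := by
    intro b
    induction b with
    | zero => intro x y; simp
    | succ b ih =>
        intro x y
        rw [pow_succ', ContinuousLinearMap.mul_apply, ContinuousLinearMap.mul_apply,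
          hTin, ih]
  -- key shift identity
  have hkey : ∀ a b : ℕ, b ≤ a → ∀ x y : H,
      ⟪(T ^ (a - b)) x, y⟫ = ⟪(T ^ a) x, (T ^ b) y⟫ := by
    intro a b hba x y
    have : (T ^ a) x = (T ^ b) ((T ^ (a - b)) x) := by
      rw [← ContinuousLinearMap.mul_apply, ← pow_add, Nat.add_sub_cancel' hba]
    rw [this, hpin b]
  -- weak convergence to identity upgrades to strong convergence
  have hstrong : ∀ x : H, Tendsto (fun k => ‖(T ^ n k) x - x‖) atTop (nhds 0) := by
    intro x
    have h1 : Tendsto (fun k => ⟪(T ^ n k) x, x⟫) atTop (nhds ⟪x, x⟫) := by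
      simpa using hIc x x
    have hre : Tendsto (fun k => Complex.re ⟪(T ^ n k) x, x⟫) atTop
        (nhds (Complex.re ⟪x, x⟫)) := (RCLike.continuous_re.tendsto _).comp h1
    have h2 : Tendsto (fun k => ‖(T ^ n k) x - x‖ ^ 2) atTop (nhds 0) := by
      have heq : ∀ k, ‖(T ^ n k) x - x‖ ^ 2
          = 2 * ‖x‖ ^ 2 - 2 * Complex.re ⟪(T ^ n k) x, x⟫ := by
        intro k
        rw [@norm_sub_sq ℂ, hpow, RCLike.re_to_complex]
        ring
      have hlim : Tendsto (fun k => 2 * ‖x‖ ^ 2 - 2 * Complex.re ⟪(T ^ n k) x, x⟫)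
          atTop (nhds (2 * ‖x‖ ^ 2 - 2 * Complex.re ⟪x, x⟫)) :=
        (tendsto_const_nhds.sub (hre.const_mul 2))
      have hz : (2 : ℝ) * ‖x‖ ^ 2 - 2 * Complex.re ⟪x, x⟫ = 0 := by
        rw [← RCLike.re_to_complex, @inner_self_eq_norm_sq ℂ]
        ring
      rw [hz] at hlim
      exact hlim.congr fun k => (heq k).symm
    have := (Real.continuous_sqrt.tendsto 0).comp h2
    simp only [Real.sqrt_zero] at this
    refine this.congr fun k => ?_
    exact Real.sqrt_sq (norm_nonneg _)
  -- construct the fast-growing index sequence j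
  set j : ℕ → ℕ := fun k => Nat.rec (m 0) (fun k jk => n jk + m (k + 1) + 1) k with hj_def
  have hj_succ : ∀ k, j (k + 1) = n (j k) + m (k + 1) + 1 := fun k => rfl
  have hj0 : j 0 = m 0 := rfl
  have hle : ∀ i, i ≤ n i := fun i => hn.le_apply
  have hjs : StrictMono j := by
    apply strictMono_nat_of_lt_succ
    intro k
    have h1 := hle (j k)
    have h2 := hj_succ k
    omega
  have hmj : ∀ k, m k ≤ n (j k) := by
    intro k
    cases k with
    | zero => rw [hj0]; exact hle (m 0)
    | succ k =>
        have h1 := hle (j (k + 1))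
        have h2 := hj_succ k
        omega
  set p : ℕ → ℕ := fun k => n (j k) - m k with hp_def
  have hps : StrictMono p := by
    apply strictMono_nat_of_lt_succ
    intro k
    have h1 := hle (j (k + 1))
    have h2 := hj_succ k
    have h3 := hmj k
    have h4 := hmj (k + 1)
    show n (j k) - m k < n (j (k + 1)) - m (k + 1)
    omega
  refine ⟨p, hps, ?_⟩
  intro x y
  have hdecomp : ∀ k, ⟪(T ^ p k) x, y⟫
      = ⟪(T ^ n (j k)) x - x, (T ^ m k) y⟫ + ⟪x, (T ^ m k) y⟫ := by
    intro k
    show ⟪(T ^ (n (j k) - m k)) x, y⟫ = _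
    rw [hkey (n (j k)) (m k) (hmj k) x y, inner_sub_left]
    ring
  -- first term tends to 0
  have hjatTop : Tendsto j atTop atTop := hjs.tendsto_atTop
  have hsub : Tendsto (fun k => ‖(T ^ n (j k)) x - x‖) atTop (nhds 0) :=
    (hstrong x).comp hjatTop
  have hterm1 : Tendsto (fun k => ⟪(T ^ n (j k)) x - x, (T ^ m k) y⟫) atTop (nhds 0) := by
    have hb : Tendsto (fun k => ‖(T ^ n (j k)) x - x‖ * ‖y‖) atTop (nhds 0) := by
      simpa using hsub.mul_const ‖y‖
    refine squeeze_zero_norm (fun k => ?_) hb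
    calc ‖⟪(T ^ n (j k)) x - x, (T ^ m k) y⟫‖
        ≤ ‖(T ^ n (j k)) x - x‖ * ‖(T ^ m k) y‖ := norm_inner_le_norm _ _
      _ = ‖(T ^ n (j k)) x - x‖ * ‖y‖ := by rw [hpow]
  -- second term tends to ⟪x, V y⟫
  have hterm2 : Tendsto (fun k => ⟪x, (T ^ m k) y⟫) atTop (nhds ⟪x, V y⟫) := by
    have hc := hVc y x
    have hconj : Tendsto (fun k => (starRingEnd ℂ) ⟪(T ^ m k) y, x⟫) atTop
        (nhds ((starRingEnd ℂ) ⟪V y, x⟫)) := (Complex.continuous_conj.tendsto _).comp hc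
    rw [inner_conj_symm] at hconj
    exact hconj.congr fun k => inner_conj_symm _ _
  have hsum := hterm1.add hterm2
  rw [zero_add] at hsum
  have hadj : ⟪(ContinuousLinearMap.adjoint V) x, y⟫ = ⟪x, V y⟫ :=
    ContinuousLinearMap.adjoint_inner_left V y x
  rw [hadj]
  exact hsum.congr fun k => (hdecomp k).symm
end

section
/- Let T be a contraction on a Hilbert space such that some subsequence of powers T^{n_k} converges weakly to an injective operator. Then T is unitary. -/
open Filter

local notation "⟪" x ", " y "⟫" => @inner ℂ _ _ x y

/-!
Write `D = 1 - T T*`. Since `‖T*‖ ≤ 1`, the norms `‖T*^m w‖` decrease, and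
`‖D y‖² ≤ ‖y‖² - ‖T* y‖²`, so `D T*^m w → 0`. As `D` is self-adjoint,
`⟪T^{n_k} D z, w⟫ = ⟪z, D T*^{n_k} w⟫ → 0`, hence `V D = 0` and injectivity of `V` gives
`T T* = 1`. Moreover `ker T ⊆ ker V = 0`, so `T` is an injective coisometry, i.e. unitary.
-/

open Topology ContinuousLinearMap

theorem eq_zero_of_tendsto_inner {𝕜 E ι : Type*} [RCLike 𝕜] [NormedAddCommGroup E]
    [InnerProductSpace 𝕜 E] {l : Filter ι} [l.NeBot] {u : ι → E} {v : E}
    (hv : ∀ y, Tendsto (fun k => inner 𝕜 (u k) y) l (𝓝 (inner 𝕜 v y)))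
    (h0 : ∀ y, Tendsto (fun k => inner 𝕜 (u k) y) l (𝓝 0)) : v = 0 :=
  ext_inner_right 𝕜 fun y => by simpa using tendsto_nhds_unique (hv y) (h0 y)

namespace ContinuousLinearMap

theorem tendsto_norm_pow_apply_sq_sub_succ {𝕜 F : Type*}
    [NontriviallyNormedField 𝕜] [SeminormedAddCommGroup F] [NormedSpace 𝕜 F]
    {S : F →L[𝕜] F} (hS : ‖S‖ ≤ 1) (w : F) :
    Tendsto (fun m => ‖(S ^ m) w‖ ^ 2 - ‖(S ^ (m + 1)) w‖ ^ 2) atTop (𝓝 0) := by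
  have hanti : Antitone fun m => ‖(S ^ m) w‖ := antitone_nat_of_succ_le fun m => by
    rw [pow_succ', mul_apply_eq_comp]
    simpa using S.le_of_opNorm_le hS ((S ^ m) w)
  have hL := tendsto_atTop_ciInf hanti ⟨0, by rintro _ ⟨m, rfl⟩; positivity⟩
  simpa using (hL.pow 2).sub ((hL.comp (tendsto_add_atTop_nat 1)).pow 2)

variable {𝕜 E : Type*} [RCLike 𝕜] [NormedAddCommGroup E] [InnerProductSpace 𝕜 E]

theorem apply_eq_zero_of_tendsto_inner_pow {T V : E →L[𝕜] E} {n : ℕ → ℕ}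
    (hn : Tendsto n atTop atTop)
    (hV : ∀ x y, Tendsto (fun k => inner 𝕜 ((T ^ n k) x) y) atTop (𝓝 (inner 𝕜 (V x) y)))
    {x : E} (hx : T x = 0) : V x = 0 :=
  eq_zero_of_tendsto_inner (hV x) fun y => tendsto_const_nhds.congr' <|
    (hn.eventually_ge_atTop 1).mono fun k hk => by
      dsimp only
      rw [← Nat.sub_add_cancel hk, pow_succ, mul_apply_eq_comp, hx, map_zero, inner_zero_left]

variable [CompleteSpace E] {T : E →L[𝕜] E}

theorem norm_sub_apply_adjoint_sq_le (hT : ‖T‖ ≤ 1) (y : E) :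
    ‖y - T (adjoint T y)‖ ^ 2 ≤ ‖y‖ ^ 2 - ‖adjoint T y‖ ^ 2 := by
  have hre : RCLike.re (inner 𝕜 y (T (adjoint T y))) = ‖adjoint T y‖ ^ 2 := by
    rw [← adjoint_inner_left, inner_self_eq_norm_sq]
  have hTT : ‖T (adjoint T y)‖ ≤ ‖adjoint T y‖ := by
    simpa using T.le_of_opNorm_le hT (adjoint T y)
  rw [@norm_sub_sq 𝕜, hre]
  nlinarith [norm_nonneg (T (adjoint T y))]

theorem tendsto_sub_apply_adjoint_apply_adjoint_pow (hT : ‖T‖ ≤ 1) (w : E) :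
    Tendsto (fun m => (adjoint T ^ m) w - T (adjoint T ((adjoint T ^ m) w))) atTop (𝓝 0) := by
  have hT' : ‖adjoint T‖ ≤ 1 := by rwa [LinearIsometryEquiv.norm_map]
  have hsq : Tendsto (fun m => ‖(adjoint T ^ m) w - T (adjoint T ((adjoint T ^ m) w))‖ ^ 2)
      atTop (𝓝 0) :=
    squeeze_zero (fun m => by positivity)
      (fun m => by
        rw [pow_succ' (adjoint T) m, mul_apply_eq_comp]
        exact norm_sub_apply_adjoint_sq_le hT ((adjoint T ^ m) w))
      (tendsto_norm_pow_apply_sq_sub_succ hT' w)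
  rw [tendsto_zero_iff_norm_tendsto_zero]
  simpa [Real.sqrt_sq (norm_nonneg _)] using hsq.sqrt

theorem apply_sub_apply_adjoint_eq_zero_of_tendsto_inner_pow {V : E →L[𝕜] E} (hT : ‖T‖ ≤ 1)
    {n : ℕ → ℕ} (hn : Tendsto n atTop atTop)
    (hV : ∀ x y, Tendsto (fun k => inner 𝕜 ((T ^ n k) x) y) atTop (𝓝 (inner 𝕜 (V x) y)))
    (z : E) : V (z - T (adjoint T z)) = 0 := by
  refine eq_zero_of_tendsto_inner (hV _) fun w => ?_
  have hself (u v : E) :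
      inner 𝕜 (u - T (adjoint T u)) v = inner 𝕜 u (v - T (adjoint T v)) := by
    rw [inner_sub_left, inner_sub_right, ← adjoint_inner_right T, ← adjoint_inner_left T]
  have hpow (m : ℕ) (u : E) : inner 𝕜 ((T ^ m) u) w = inner 𝕜 u ((adjoint T ^ m) w) := by
    rw [← adjoint_inner_right, ← star_eq_adjoint, star_pow, star_eq_adjoint]
  simp only [hpow, hself]
  simpa using tendsto_const_nhds.inner
    ((tendsto_sub_apply_adjoint_apply_adjoint_pow hT w).comp hn) (x := z)

theorem mem_unitary_of_injective_of_apply_adjoint_apply (hinj : Function.Injective T)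
    (h : ∀ z, T (adjoint T z) = z) : T ∈ unitary (E →L[𝕜] E) :=
  Unitary.mem_iff.2 ⟨ext fun x => hinj (h (T x)), ext h⟩

end ContinuousLinearMap

/-- If a contraction `T` on a Hilbert space has a subsequence of powers converging
weakly to an injective operator, then `T` is unitary. -/
theorem stmt_5 {H : Type*} [NormedAddCommGroup H] [InnerProductSpace ℂ H]
    [CompleteSpace H]
    (T V : H →L[ℂ] H) (hT : ‖T‖ ≤ 1)
    (n : ℕ → ℕ) (hn : StrictMono n)
    (hV : ∀ x y : H, Tendsto (fun k => ⟪(T ^ n k) x, y⟫) atTop (nhds ⟪V x, y⟫))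
    (hinj : Function.Injective V) :
    (∀ x, ‖T x‖ = ‖x‖) ∧ Function.Surjective T := by
  have hV0 := (injective_iff_map_eq_zero V).1 hinj
  have hTinj : Function.Injective T := (injective_iff_map_eq_zero T).2 fun x hx =>
    hV0 x (apply_eq_zero_of_tendsto_inner_pow hn.tendsto_atTop hV hx)
  have hcoisom (z : H) : T (adjoint T z) = z := (sub_eq_zero.1 <| hV0 _ <|
    apply_sub_apply_adjoint_eq_zero_of_tendsto_inner_pow hT hn.tendsto_atTop hV z).symm
  exact ⟨norm_map_of_mem_unitary (mem_unitary_of_injective_of_apply_adjoint_apply hTinj hcoisom),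
    fun z => ⟨adjoint T z, hcoisom z⟩⟩
end

section
/- Let T be a unitary operator on a Hilbert space whose weak limit semigroup contains a unitary operator. Then the identity operator belongs to the weak limit semigroup of T. -/
open Filter

local notation "⟪" x ", " y "⟫" => @inner ℂ _ _ x y

/-- If the weak limit semigroup of a unitary operator `T` contains a unitary operator,
then it contains the identity. -/
theorem stmt_6 {H : Type*} [NormedAddCommGroup H] [InnerProductSpace ℂ H]
    (T : H →L[ℂ] H) (hiso : ∀ x, ‖T x‖ = ‖x‖) (hsurj : Function.Surjective T)
    (U : H →L[ℂ] H) (hUiso : ∀ x, ‖U x‖ = ‖x‖) (hUsurj : Function.Surjective U)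
    (hU : IsWeakLimitOfPowers T U) :
    IsWeakLimitOfPowers T 1 := by
  obtain ⟨n, hn, hlim⟩ := hU
  -- powers of T are isometric
  have hpow : ∀ (m : ℕ) (x : H), ‖(T ^ m) x‖ = ‖x‖ := by
    intro m
    induction m with
    | zero => simp
    | succ m ih =>
      intro x
      rw [pow_succ']
      simp only [ContinuousLinearMap.mul_apply]
      rw [hiso, ih]
  -- powers of T preserve inner products
  have hpinner : ∀ (m : ℕ) (x y : H), ⟪(T ^ m) x, (T ^ m) y⟫ = ⟪x, y⟫ := fun m =>
    (LinearMap.norm_map_iff_inner_map_map (T ^ m)).mp (hpow m)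
  have hUinner : ∀ x y : H, ⟪U x, U y⟫ = ⟪x, y⟫ :=
    (LinearMap.norm_map_iff_inner_map_map U).mp hUiso
  -- strong convergence: T^(n k) y → U y in norm
  have hstrong : ∀ y : H, Tendsto (fun k => ‖(T ^ n k) y - U y‖) atTop (nhds 0) := by
    intro y
    have hsq : Tendsto (fun k => ‖(T ^ n k) y - U y‖ ^ 2) atTop (nhds 0) := by
      have hre : Tendsto (fun k => RCLike.re (K := ℂ) ⟪(T ^ n k) y, U y⟫) atTop
          (nhds (RCLike.re (K := ℂ) ⟪U y, U y⟫)) :=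
        (RCLike.continuous_re.tendsto _).comp (hlim y (U y))
      have : Tendsto (fun k => ‖y‖ ^ 2 - 2 * RCLike.re (K := ℂ) ⟪(T ^ n k) y, U y⟫
          + ‖y‖ ^ 2) atTop (nhds (‖y‖ ^ 2 - 2 * RCLike.re (K := ℂ) ⟪U y, U y⟫ + ‖y‖ ^ 2)) :=
        (tendsto_const_nhds.sub (hre.const_mul 2)).add tendsto_const_nhds
      have hval : ‖y‖ ^ 2 - 2 * RCLike.re (K := ℂ) ⟪U y, U y⟫ + ‖y‖ ^ 2 = 0 := by
        rw [@inner_self_eq_norm_sq ℂ, hUiso]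
        ring
      rw [hval] at this
      convert this using 2 with k
      rw [@norm_sub_sq ℂ, hpow, hUiso]
    have : Tendsto (fun k => Real.sqrt (‖(T ^ n k) y - U y‖ ^ 2)) atTop
        (nhds (Real.sqrt 0)) := (Real.continuous_sqrt.tendsto _).comp hsq
    simpa [Real.sqrt_sq (norm_nonneg _)] using this
  -- the sequence of differences m k = n (2k) - n k tends to infinity
  set m : ℕ → ℕ := fun k => n (2 * k) - n k with hm
  have h2 : ∀ a b : ℕ, n a + b ≤ n (a + b) := by
    intro a b
    induction b with
    | zero => simp
    | succ b ih =>
      have := hn (show a + b < a + (b+1) by omega)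
      omega
  have hmk : ∀ k, n k + m k = n (2 * k) := by
    intro k
    have : n k ≤ n (2 * k) := hn.le_iff_le.mpr (by omega)
    simp only [hm]
    omega
  have hmtop : Tendsto m atTop atTop := by
    apply tendsto_atTop_mono (fun k => ?_) tendsto_id
    show k ≤ m k
    have h1 : n k + k ≤ n (k + k) := h2 k k
    have h3 : n (k + k) = n (2 * k) := by ring_nf
    simp only [hm]
    omega
  obtain ⟨φ, hφ, hmφ⟩ := strictMono_subseq_of_tendsto_atTop hmtop
  refine ⟨m ∘ φ, hmφ, fun x y => ?_⟩
  simp only [ContinuousLinearMap.one_apply]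
  -- key: ⟪T^(m k) x, y⟫ = ⟪T^(n 2k) x, T^(n k) y⟫
  have key : ∀ k, ⟪(T ^ m k) x, y⟫ = ⟪(T ^ n (2 * k)) x, (T ^ n k) y⟫ := by
    intro k
    rw [← hpinner (n k) ((T ^ m k) x) y]
    congr 1
    rw [← ContinuousLinearMap.mul_apply, ← pow_add, hmk]
  -- ⟪T^(n 2k) x, T^(n k) y⟫ → ⟪U x, U y⟫ = ⟪x, y⟫
  have h2k : Tendsto (fun k => ⟪(T ^ n (2 * k)) x, U y⟫) atTop (nhds ⟪U x, U y⟫) :=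
    (hlim x (U y)).comp (tendsto_atTop_mono (fun k => by show k ≤ 2 * k; omega) tendsto_id)
  have herr : Tendsto (fun k => ⟪(T ^ n (2 * k)) x, (T ^ n k) y - U y⟫) atTop (nhds 0) := by
    have hb : ∀ k, ‖⟪(T ^ n (2 * k)) x, (T ^ n k) y - U y⟫‖ ≤ ‖x‖ * ‖(T ^ n k) y - U y‖ := by
      intro k
      calc ‖⟪(T ^ n (2 * k)) x, (T ^ n k) y - U y⟫‖
          ≤ ‖(T ^ n (2 * k)) x‖ * ‖(T ^ n k) y - U y‖ := norm_inner_le_norm _ _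
        _ = ‖x‖ * ‖(T ^ n k) y - U y‖ := by rw [hpow]
    have hb0 : Tendsto (fun k => ‖x‖ * ‖(T ^ n k) y - U y‖) atTop (nhds 0) := by
      simpa using (hstrong y).const_mul ‖x‖
    rw [tendsto_zero_iff_norm_tendsto_zero]
    exact squeeze_zero (fun k => norm_nonneg _) hb hb0
  have hmain : Tendsto (fun k => ⟪(T ^ m k) x, y⟫) atTop (nhds ⟪x, y⟫) := by
    have : Tendsto (fun k => ⟪(T ^ n (2 * k)) x, (T ^ n k) y - U y⟫
        + ⟪(T ^ n (2 * k)) x, U y⟫) atTop (nhds (0 + ⟪U x, U y⟫)) := herr.add h2k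
    rw [zero_add, hUinner] at this
    convert this using 2 with k
    rw [key, inner_sub_right]
    ring
  exact hmain.comp hφ.tendsto_atTop
end

section
/- Let T be a contraction on a Hilbert space. If (I + T^m)/2 belongs to the weak limit semigroup of T for every sufficiently large m ∈ ℕ, then the weak limit semigroup of T is a convex set. -/
/-!
Fix a dense sequence `e` in `H`. On contractions the weak operator topology is the topology of
the coefficients `⟪A (e a), e b⟫`, so `S ↦ (⟪S (e a), e b⟫)_{a,b}` identifies the weak limit
semigroup with the set of cluster points of the powers of `T` in the metrizable space
`ℕ × ℕ → ℂ`; in particular it is closed under weak limits of sequences. It is also closed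
under right multiplication by powers of `T`. If `V = lim T^{n_i}` and `W = lim T^{m_j}`, then
`(I + T^{d_j})/2 · T^{m_j} = (T^{m_j} + T^{n_{m_j + k₀}})/2` with `d_j ≥ k₀` lies in the
semigroup and tends weakly to `(V + W)/2`. So the semigroup is midpoint convex and closed,
hence convex.
-/

open Filter

local notation "⟪" x ", " y "⟫" => @inner ℂ _ _ x y

open Topology

lemma tendsto_of_denseRange_of_lipschitzWith {ι κ X α : Type*} [PseudoMetricSpace X]
    [PseudoMetricSpace α] {l : Filter ι} {F : ι → X → α} {f : X → α} {K : NNReal}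
    (hF : ∀ i, LipschitzWith K (F i)) (hf : Continuous f) {e : κ → X} (he : DenseRange e)
    (h : ∀ a, Tendsto (F · (e a)) l (𝓝 (f (e a)))) (x : X) :
    Tendsto (F · x) l (𝓝 (f x)) :=
  ((LipschitzWith.uniformEquicontinuous F K hF).equicontinuous.isClosed_setOfPred_tendsto
    hf).closure_subset_iff.mpr (Set.range_subset_iff.mpr h) (he x)

lemma Real.Icc_subset_of_isClosed_of_midpoint_mem {s : Set ℝ} (hs : IsClosed s) (h0 : 0 ∈ s)
    (h1 : 1 ∈ s) (hmid : ∀ a ∈ s, ∀ b ∈ s, (a + b) / 2 ∈ s) : Set.Icc 0 1 ⊆ s := by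
  have dyadic : ∀ r j : ℕ, j ≤ 2 ^ r → (j : ℝ) / 2 ^ r ∈ s := by
    intro r
    induction r with
    | zero =>
      intro j hj
      obtain rfl | rfl : j = 0 ∨ j = 1 := by omega
      · simpa using h0
      · simpa using h1
    | succ r ih =>
      intro j hj
      rw [pow_succ] at hj
      have hsum : ((j / 2 : ℕ) : ℝ) + ((j + 1) / 2 : ℕ) = j := by norm_cast; omega
      convert hmid _ (ih (j / 2) (by omega)) _ (ih ((j + 1) / 2) (by omega)) using 1
      rw [← add_div, hsum, pow_succ, div_div]
  intro t ⟨ht0, ht1⟩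
  have approx : Tendsto (fun r : ℕ => (⌊t * 2 ^ r⌋₊ : ℝ) / 2 ^ r) atTop (𝓝 t) :=
    (tendsto_nat_floor_mul_div_atTop ht0).comp (tendsto_pow_atTop_atTop_of_one_lt one_lt_two)
  refine hs.mem_of_tendsto approx (Eventually.of_forall fun r => dyadic r _ ?_)
  exact Nat.floor_le_of_le (by push_cast; exact mul_le_of_le_one_left (by positivity) ht1)

section WeakLimit

variable {H : Type*} [NormedAddCommGroup H] [InnerProductSpace ℂ H]

lemma ContinuousLinearMap.norm_pow_le_one {T : H →L[ℂ] H} (hT : ‖T‖ ≤ 1) (n : ℕ) :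
    ‖T ^ n‖ ≤ 1 := by
  rcases n.eq_zero_or_pos with rfl | hn
  · exact ContinuousLinearMap.norm_id_le
  · exact (norm_pow_le' T hn).trans (pow_le_one₀ (norm_nonneg T) hT)

lemma ContinuousLinearMap.norm_apply_le_of_norm_le_one {A : H →L[ℂ] H} (hA : ‖A‖ ≤ 1) (x : H) :
    ‖A x‖ ≤ ‖x‖ :=
  (A.le_opNorm x).trans (mul_le_of_le_one_left (norm_nonneg x) hA)

lemma lipschitzWith_inner_apply_left {A : H →L[ℂ] H} (hA : ‖A‖ ≤ 1) (y : H) :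
    LipschitzWith ‖y‖₊ (fun x => ⟪A x, y⟫) :=
  LipschitzWith.of_dist_le_mul fun x x' => by
    rw [dist_eq_norm, dist_eq_norm, ← inner_sub_left, ← map_sub, mul_comm, coe_nnnorm]
    exact (norm_inner_le_norm _ _).trans
      (mul_le_mul_of_nonneg_right (A.norm_apply_le_of_norm_le_one hA _) (norm_nonneg y))

lemma lipschitzWith_inner_right (x : H) : LipschitzWith ‖x‖₊ (fun y => ⟪x, y⟫) :=
  LipschitzWith.of_dist_le_mul fun y y' => by
    rw [dist_eq_norm, dist_eq_norm, ← inner_sub_right, coe_nnnorm]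
    exact norm_inner_le_norm _ _

lemma tendsto_inner_of_denseRange {ι : Type*} {l : Filter ι} {A : ι → H →L[ℂ] H}
    (hA : ∀ i, ‖A i‖ ≤ 1) (L : H →L[ℂ] H) {e : ℕ → H} (he : DenseRange e)
    (h : ∀ a b, Tendsto (fun i => ⟪A i (e a), e b⟫) l (𝓝 ⟪L (e a), e b⟫)) (x y : H) :
    Tendsto (fun i => ⟪A i x, y⟫) l (𝓝 ⟪L x, y⟫) := by
  have hy : ∀ a, Tendsto (fun i => ⟪A i (e a), y⟫) l (𝓝 ⟪L (e a), y⟫) := fun a =>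
    tendsto_of_denseRange_of_lipschitzWith (K := ‖e a‖₊)
      (fun i => (lipschitzWith_inner_right _).weaken
        ((A i).norm_apply_le_of_norm_le_one (hA i) (e a)))
      (continuous_const.inner continuous_id) he (h a) y
  exact tendsto_of_denseRange_of_lipschitzWith (fun i => lipschitzWith_inner_apply_left (hA i) y)
    (L.continuous.inner continuous_const) he hy x

noncomputable def weakCoeffs (e : ℕ → H) (A : H →L[ℂ] H) (p : ℕ × ℕ) : ℂ :=
  ⟪A (e p.1), e p.2⟫

lemma isWeakLimitOfPowers_iff_mapClusterPt {T : H →L[ℂ] H} (hT : ‖T‖ ≤ 1) {e : ℕ → H}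
    (he : DenseRange e) {S : H →L[ℂ] H} :
    IsWeakLimitOfPowers T S ↔
      MapClusterPt (weakCoeffs e S) atTop (fun k => weakCoeffs e (T ^ k)) := by
  constructor
  · rintro ⟨n, hn, hlim⟩
    exact MapClusterPt.of_comp hn.tendsto_atTop
      (tendsto_pi_nhds.mpr fun p : ℕ × ℕ => hlim (e p.1) (e p.2)).mapClusterPt
  · intro hS
    obtain ⟨ψ, hψ, hlim⟩ := hS.tendsto_subseq
    exact ⟨ψ, hψ, tendsto_inner_of_denseRange (fun k => T.norm_pow_le_one hT (ψ k)) S he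
      fun a b => tendsto_pi_nhds.mp hlim (a, b)⟩

lemma isWeakLimitOfPowers_of_tendsto [TopologicalSpace.SeparableSpace H] {T : H →L[ℂ] H}
    (hT : ‖T‖ ≤ 1) {S : ℕ → H →L[ℂ] H} (hS : ∀ j, IsWeakLimitOfPowers T (S j))
    {L : H →L[ℂ] H} (hL : ∀ x y, Tendsto (fun j => ⟪S j x, y⟫) atTop (𝓝 ⟪L x, y⟫)) :
    IsWeakLimitOfPowers T L := by
  have he := TopologicalSpace.denseRange_denseSeq H
  simp only [isWeakLimitOfPowers_iff_mapClusterPt hT he] at hS ⊢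
  exact isClosed_setOfPred_clusterPt.mem_of_tendsto
    (tendsto_pi_nhds.mpr fun p => hL _ _) (Eventually.of_forall hS)

lemma IsWeakLimitOfPowers.mul_pow {T A : H →L[ℂ] H} (h : IsWeakLimitOfPowers T A) (M : ℕ) :
    IsWeakLimitOfPowers T (A * T ^ M) := by
  obtain ⟨n, hn, hlim⟩ := h
  refine ⟨fun k => n k + M, fun i j hij => Nat.add_lt_add_right (hn hij) M, fun x y => ?_⟩
  simp only [pow_add, mul_apply_eq_comp]
  exact hlim ((T ^ M) x) y

lemma IsWeakLimitOfPowers.half_add [TopologicalSpace.SeparableSpace H] {T : H →L[ℂ] H}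
    (hT : ‖T‖ ≤ 1)
    (hmid : ∃ k₀ : ℕ, ∀ k ≥ k₀, IsWeakLimitOfPowers T ((1 / 2 : ℂ) • (1 + T ^ k)))
    {V W : H →L[ℂ] H} (hV : IsWeakLimitOfPowers T V) (hW : IsWeakLimitOfPowers T W) :
    IsWeakLimitOfPowers T ((1 / 2 : ℂ) • (V + W)) := by
  obtain ⟨k₀, hk₀⟩ := hmid
  obtain ⟨n, hn, hV⟩ := hV
  obtain ⟨m, hm, hW⟩ := hW
  obtain ⟨d, hd⟩ : ∃ d : ℕ → ℕ, ∀ j, k₀ ≤ d j ∧ d j + m j = n (m j + k₀) :=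
    ⟨fun j => n (m j + k₀) - m j, fun j => by
      have := hn.le_apply (x := m j + k₀)
      dsimp only
      omega⟩
  have hsplit : ∀ j, ((1 / 2 : ℂ) • (1 + T ^ d j)) * T ^ m j
      = (1 / 2 : ℂ) • (T ^ m j + T ^ n (m j + k₀)) := fun j => by
    rw [smul_mul_assoc, add_mul, one_mul, ← pow_add, (hd j).2]
  refine isWeakLimitOfPowers_of_tendsto hT (fun j => ((hk₀ _ (hd j).1).mul_pow (m j)))
    fun x y => ?_
  have hVsub : Tendsto (fun j => ⟪(T ^ n (m j + k₀)) x, y⟫) atTop (𝓝 ⟪V x, y⟫) :=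
    (hV x y).comp (tendsto_atTop_mono (fun j => Nat.le_add_right _ k₀) hm.tendsto_atTop)
  simp only [hsplit, smul_apply, add_apply, inner_smul_left, inner_add_left]
  simpa only [add_comm ⟪V x, y⟫] using ((hW x y).add hVsub).const_mul _

end WeakLimit

theorem stmt_8_general {H : Type*} [NormedAddCommGroup H] [InnerProductSpace ℂ H]
    [TopologicalSpace.SeparableSpace H]
    (T : H →L[ℂ] H) (hT : ‖T‖ ≤ 1)
    (hmid : ∃ k₀ : ℕ, ∀ k ≥ k₀, IsWeakLimitOfPowers T ((1 / 2 : ℂ) • (1 + T ^ k))) :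
    ∀ V W : H →L[ℂ] H, IsWeakLimitOfPowers T V → IsWeakLimitOfPowers T W →
      ∀ t : ℝ, 0 ≤ t → t ≤ 1 →
        IsWeakLimitOfPowers T ((t : ℂ) • V + ((1 - t : ℝ) : ℂ) • W) := by
  intro V W hV hW t ht0 ht1
  let s : Set ℝ := {t | IsWeakLimitOfPowers T ((t : ℂ) • V + ((1 - t : ℝ) : ℂ) • W)}
  have hs : IsClosed s := IsSeqClosed.isClosed fun r t hr hlim =>
    isWeakLimitOfPowers_of_tendsto hT hr fun x y => by
      have hc : Continuous fun t : ℝ => (t : ℂ) * ⟪V x, y⟫ + ((1 - t : ℝ) : ℂ) * ⟪W x, y⟫ := by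
        fun_prop
      simp only [add_apply, smul_apply, inner_add_left, inner_smul_left, Complex.conj_ofReal]
      exact (hc.tendsto t).comp hlim
  have h0 : 0 ∈ s := by simpa [s] using hW
  have h1 : 1 ∈ s := by simpa [s] using hV
  have hmidpoint : ∀ a ∈ s, ∀ b ∈ s, (a + b) / 2 ∈ s := fun a ha b hb => by
    show IsWeakLimitOfPowers T _
    convert IsWeakLimitOfPowers.half_add hT hmid ha hb using 2
    push_cast
    module
  exact Real.Icc_subset_of_isClosed_of_midpoint_mem hs h0 h1 hmidpoint ⟨ht0, ht1⟩

/-- If `(I + T^k)/2` belongs to the weak limit semigroup of the contraction `T` for all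
sufficiently large `k`, then the weak limit semigroup of `T` is convex. -/
theorem stmt_8 {H : Type*} [NormedAddCommGroup H] [InnerProductSpace ℂ H]
    [TopologicalSpace.SeparableSpace H] [CompleteSpace H]
    (T : H →L[ℂ] H) (hT : ‖T‖ ≤ 1)
    (hmid : ∃ k₀ : ℕ, ∀ k ≥ k₀, IsWeakLimitOfPowers T ((1 / 2 : ℂ) • (1 + T ^ k))) :
    ∀ V W : H →L[ℂ] H, IsWeakLimitOfPowers T V → IsWeakLimitOfPowers T W →
      ∀ t : ℝ, 0 ≤ t → t ≤ 1 →
        IsWeakLimitOfPowers T ((t : ℂ) • V + ((1 - t : ℝ) : ℂ) • W) :=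
  stmt_8_general T hT hmid
end
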